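/- arXiv:2112.08553 — 2 statements merged into one kernel-verified Lean document; each statement's English description precedes it below -/
import Mathlib

section
/- Let W ∈ ℝ^{d×K} with columns w_1, …, w_K (K ≥ 2), let z ∈ ℝ^d, and let p = δ(Wᵀz) be the softmax of the logits ⟨w_1, z⟩, …, ⟨w_K, z⟩. If ∑_{i=1}^K p_i² ≥ 1 − ε for some ε ∈ (0, 1/2), then there exists an index j such that for all k ≠ j, ⟨w_j, z⟩ − ⟨w_k, z⟩ ≥ log((1−ε)/ε). -/
/-- The softmax function `δ(x)_j = exp(x_j) / ∑_k exp(x_k)`. -/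
noncomputable def softmax {K : ℕ} (x : Fin K → ℝ) : Fin K → ℝ :=
  fun j => Real.exp (x j) / ∑ k, Real.exp (x k)

/-- Let `W ∈ ℝ^{d×K}` have columns `w_1,…,w_K` and let
`p = δ(Wᵀz)` be the softmax of the logits `⟨w_k, z⟩`. If `∑ p_i^2 ≥ 1 - ε`
for `ε ∈ (0, 1/2)`, then there is a `j` with
`⟨w_j, z⟩ - ⟨w_k, z⟩ ≥ log((1-ε)/ε)` for all `k ≠ j`. -/
theorem stmt_10 (d K : ℕ) (hK : 2 ≤ K) (w : Fin K → Fin d → ℝ) (z : Fin d → ℝ)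
    (p : Fin K → ℝ) (hp : p = softmax (fun k => ∑ i, w k i * z i))
    (ε : ℝ) (hε0 : 0 < ε) (hε1 : ε < 1 / 2)
    (hsum : 1 - ε ≤ ∑ i, (p i) ^ 2) :
    ∃ j, ∀ k, k ≠ j →
      Real.log ((1 - ε) / ε) ≤ (∑ i, w j i * z i) - (∑ i, w k i * z i) := by
  set x : Fin K → ℝ := fun k => ∑ i, w k i * z i with hx
  have hKpos : 0 < K := by omega
  have hS : 0 < ∑ k, Real.exp (x k) := by
    apply Finset.sum_pos (fun k _ => Real.exp_pos _)
    exact ⟨⟨0, hKpos⟩, Finset.mem_univ _⟩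
  have hppos : ∀ k, 0 < p k := by
    intro k
    rw [hp]
    exact div_pos (Real.exp_pos _) hS
  have hpsum : ∑ k, p k = 1 := by
    rw [hp]
    simp only [softmax]
    rw [← Finset.sum_div]
    exact div_self (ne_of_gt hS)
  -- pick argmax j
  obtain ⟨j, -, hj⟩ := Finset.exists_max_image Finset.univ p ⟨⟨0, hKpos⟩, Finset.mem_univ _⟩
  have hpj : 1 - ε ≤ p j := by
    calc 1 - ε ≤ ∑ i, (p i) ^ 2 := hsum
    _ ≤ ∑ i, p i * p j := by
        apply Finset.sum_le_sum
        intro i _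
        rw [sq]
        exact mul_le_mul_of_nonneg_left (hj i (Finset.mem_univ i)) (hppos i).le
    _ = p j := by rw [← Finset.sum_mul, hpsum, one_mul]
  refine ⟨j, fun k hk => ?_⟩
  have hpk : p k ≤ ε := by
    have h2 : p k + p j ≤ ∑ i, p i := by
      have := Finset.sum_le_sum_of_subset_of_nonneg
        (Finset.subset_univ {k, j}) (fun i _ _ => (hppos i).le)
      rwa [Finset.sum_pair hk] at this
    linarith
  have hratio : (1 - ε) / ε ≤ p j / p k :=
    div_le_div₀ (hppos j).le hpj (hppos k) hpk
  have hlog : Real.log ((1 - ε) / ε) ≤ Real.log (p j / p k) :=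
    Real.log_le_log (div_pos (by linarith) hε0) hratio
  have heq : Real.log (p j / p k) = x j - x k := by
    rw [hp]
    simp only [softmax]
    have h1 : (Real.exp (x j) / ∑ m, Real.exp (x m)) / (Real.exp (x k) / ∑ m, Real.exp (x m))
        = Real.exp (x j) / Real.exp (x k) := by
      field_simp
    rw [h1, ← Real.exp_sub, Real.log_exp]
  rw [heq] at hlog
  exact hlog
end

section
/- Let p ∈ ℝ^K (K ≥ 1) be a probability vector with strictly positive entries, and for T > 0 let q(T) = Flatten(p,T), q(T)_i = p_i^T / ∑_j p_j^T. Then the Shannon entropy H(q(T)) = −∑_i q(T)_i log q(T)_i is nonincreasing in T on (0,∞): for all 0 < T₁ ≤ T₂, H(q(T₁)) ≥ H(q(T₂)). In particular, for 0 < T ≤ 1, H(Flatten(p,T)) ≥ H(p). -/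
/-- The flattening operation `Flatten(p,T)_i = p_i^T / ∑_j p_j^T`. -/
noncomputable def flatten {K : ℕ} (p : Fin K → ℝ) (T : ℝ) : Fin K → ℝ :=
  fun i => p i ^ T / ∑ j, p j ^ T

/-- Shannon entropy `H(p) = -∑ p_i log p_i`. -/
noncomputable def shannonEntropy {K : ℕ} (p : Fin K → ℝ) : ℝ :=
  -∑ i, p i * Real.log (p i)

open Finset Real

noncomputable def Zf {K : ℕ} (p : Fin K → ℝ) (T : ℝ) : ℝ := ∑ j, p j ^ T

noncomputable def cf {K : ℕ} (p : Fin K → ℝ) (T : ℝ) : ℝ :=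
  ∑ i, (p i ^ T / Zf p T) * Real.log (p i)

lemma Zf_pos {K : ℕ} (hK : 1 ≤ K) (p : Fin K → ℝ) (hpos : ∀ i, 0 < p i) (T : ℝ) :
    0 < Zf p T :=
  Finset.sum_pos (fun i _ => Real.rpow_pos_of_pos (hpos i) T) ⟨⟨0, hK⟩, Finset.mem_univ _⟩

lemma wsum {K : ℕ} (hK : 1 ≤ K) (p : Fin K → ℝ) (hpos : ∀ i, 0 < p i) (T : ℝ) :
    ∑ i, p i ^ T / ∑ j, p j ^ T = 1 := by
  have hZ : (∑ j, p j ^ T) ≠ 0 := (Zf_pos hK p hpos T).ne'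
  rw [← Finset.sum_div, div_self hZ]

lemma entropy_eq {K : ℕ} (hK : 1 ≤ K) (p : Fin K → ℝ) (hpos : ∀ i, 0 < p i) (T : ℝ) :
    shannonEntropy (flatten p T) = Real.log (Zf p T) - T * cf p T := by
  have hZ : (0:ℝ) < ∑ j, p j ^ T := Zf_pos hK p hpos T
  have hw : ∑ i, p i ^ T / ∑ j, p j ^ T = 1 := wsum hK p hpos T
  unfold shannonEntropy flatten cf Zf
  have key : ∀ i : Fin K, (p i ^ T / ∑ j, p j ^ T) * Real.log (p i ^ T / ∑ j, p j ^ T)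
      = T * ((p i ^ T / ∑ j, p j ^ T) * Real.log (p i))
        - (p i ^ T / ∑ j, p j ^ T) * Real.log (∑ j, p j ^ T) := by
    intro i
    rw [Real.log_div (Real.rpow_pos_of_pos (hpos i) T).ne' hZ.ne', Real.log_rpow (hpos i)]
    ring
  rw [Finset.sum_congr rfl (fun i _ => key i), Finset.sum_sub_distrib, ← Finset.mul_sum,
    ← Finset.sum_mul, hw]
  ring

lemma jensen_Zf {K : ℕ} (hK : 1 ≤ K) (p : Fin K → ℝ) (hpos : ∀ i, 0 < p i) (T S : ℝ) :
    Real.log (Zf p T) + (S - T) * cf p T ≤ Real.log (Zf p S) := by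
  have hZT := Zf_pos hK p hpos T
  have hZS := Zf_pos hK p hpos S
  have h := convexOn_exp.map_sum_le (t := Finset.univ)
    (w := fun i => p i ^ T / Zf p T) (p := fun i => (S - T) * Real.log (p i))
    (fun i _ => div_nonneg (Real.rpow_pos_of_pos (hpos i) T).le hZT.le)
    (wsum hK p hpos T) (fun i _ => Set.mem_univ _)
  simp only [smul_eq_mul] at h
  have h2 : ∑ i, (p i ^ T / Zf p T) * ((S - T) * Real.log (p i)) = (S - T) * cf p T := by
    unfold cf
    rw [Finset.mul_sum]
    exact Finset.sum_congr rfl fun i _ => by ring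
  have h3 : ∑ i, (p i ^ T / Zf p T) * Real.exp ((S - T) * Real.log (p i))
      = Zf p S / Zf p T := by
    unfold Zf
    rw [Finset.sum_div]
    refine Finset.sum_congr rfl fun i _ => ?_
    rw [show (S - T) * Real.log (p i) = Real.log (p i) * (S - T) by ring,
      ← Real.rpow_def_of_pos (hpos i), div_mul_eq_mul_div, ← Real.rpow_add (hpos i)]
    ring_nf
  rw [h2, h3] at h
  have := Real.log_le_log (Real.exp_pos _) h
  rw [Real.log_exp, Real.log_div hZS.ne' hZT.ne'] at this
  linarith

lemma cf_mono {K : ℕ} (hK : 1 ≤ K) (p : Fin K → ℝ) (hpos : ∀ i, 0 < p i)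
    {T₁ T₂ : ℝ} (h : T₁ ≤ T₂) : cf p T₁ ≤ cf p T₂ := by
  have hZ1 := Zf_pos hK p hpos T₁
  have hZ2 := Zf_pos hK p hpos T₂
  have hc : ∀ T, cf p T = (∑ i, p i ^ T * Real.log (p i)) / Zf p T := by
    intro T
    unfold cf
    rw [Finset.sum_div]
    exact Finset.sum_congr rfl fun i _ => by ring
  rw [hc, hc, div_le_div_iff₀ hZ1 hZ2]
  have expand : ∀ A B : ℝ, (∑ i, p i ^ A * Real.log (p i)) * Zf p B
      = ∑ i, ∑ j, p i ^ A * Real.log (p i) * p j ^ B := by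
    intro A B
    unfold Zf
    rw [Finset.sum_mul]
    exact Finset.sum_congr rfl fun i _ => by rw [Finset.mul_sum]
  rw [expand, expand]
  set g : Fin K → Fin K → ℝ := fun i j =>
    p i ^ T₂ * Real.log (p i) * p j ^ T₁ - p i ^ T₁ * Real.log (p i) * p j ^ T₂ with hg
  have key : ∀ i j, 0 ≤ g i j + g j i := by
    intro i j
    have hfac : g i j + g j i
        = p i ^ T₁ * p j ^ T₁ * ((p i ^ (T₂ - T₁) - p j ^ (T₂ - T₁)) * (Real.log (p i) - Real.log (p j))) := by
      simp only [hg]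
      have e1 : p i ^ T₂ = p i ^ T₁ * p i ^ (T₂ - T₁) := by
        rw [← Real.rpow_add (hpos i)]; ring_nf
      have e2 : p j ^ T₂ = p j ^ T₁ * p j ^ (T₂ - T₁) := by
        rw [← Real.rpow_add (hpos j)]; ring_nf
      rw [e1, e2]; ring
    rw [hfac]
    refine mul_nonneg (mul_nonneg (Real.rpow_pos_of_pos (hpos i) T₁).le
      (Real.rpow_pos_of_pos (hpos j) T₁).le) ?_
    rcases le_total (p i) (p j) with hij | hij
    · have ha : p i ^ (T₂ - T₁) - p j ^ (T₂ - T₁) ≤ 0 :=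
        sub_nonpos.mpr (Real.rpow_le_rpow (hpos i).le hij (by linarith))
      have hb : Real.log (p i) - Real.log (p j) ≤ 0 :=
        sub_nonpos.mpr (Real.log_le_log (hpos i) hij)
      nlinarith
    · exact mul_nonneg
        (sub_nonneg.mpr (Real.rpow_le_rpow (hpos j).le hij (by linarith)))
        (sub_nonneg.mpr (Real.log_le_log (hpos j) hij))
  have hsum2 : 0 ≤ ∑ i, ∑ j, (g i j + g j i) :=
    Finset.sum_nonneg fun i _ => Finset.sum_nonneg fun j _ => key i j
  have hsplit : ∑ i, ∑ j, (g i j + g j i) = ∑ i, ∑ j, g i j + ∑ i, ∑ j, g j i := by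
    simp [Finset.sum_add_distrib]
  have hcomm : ∑ i : Fin K, ∑ j : Fin K, g j i = ∑ i : Fin K, ∑ j : Fin K, g i j :=
    Finset.sum_comm
  rw [hsplit, hcomm] at hsum2
  have : 0 ≤ ∑ i, ∑ j, g i j := by linarith
  have := Finset.sum_le_sum (f := fun i => ∑ j, p i ^ T₁ * Real.log (p i) * p j ^ T₂)
    (g := fun i => ∑ j, p i ^ T₂ * Real.log (p i) * p j ^ T₁) (s := Finset.univ)
  -- convert `0 ≤ ∑ g` to the goal
  have hsub : ∑ i, ∑ j, g i j
      = (∑ i, ∑ j, p i ^ T₂ * Real.log (p i) * p j ^ T₁)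
        - ∑ i, ∑ j, p i ^ T₁ * Real.log (p i) * p j ^ T₂ := by
    simp [hg, Finset.sum_sub_distrib]
  linarith [hsub ▸ ‹0 ≤ ∑ i, ∑ j, g i j›]

/-- For a probability vector `p` with strictly positive entries,
`T ↦ H(Flatten(p,T))` is nonincreasing on `(0,∞)`; in particular
`H(Flatten(p,T)) ≥ H(p)` for `0 < T ≤ 1`. -/
theorem stmt_16 (K : ℕ) (hK : 1 ≤ K) (p : Fin K → ℝ)
    (hpos : ∀ i, 0 < p i) (hsum : ∑ i, p i = 1) :
    (∀ T₁ T₂ : ℝ, 0 < T₁ → T₁ ≤ T₂ →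
      shannonEntropy (flatten p T₂) ≤ shannonEntropy (flatten p T₁)) ∧
    (∀ T : ℝ, 0 < T → T ≤ 1 →
      shannonEntropy p ≤ shannonEntropy (flatten p T)) := by
  have main : ∀ T₁ T₂ : ℝ, 0 < T₁ → T₁ ≤ T₂ →
      shannonEntropy (flatten p T₂) ≤ shannonEntropy (flatten p T₁) := by
    intro T₁ T₂ hT₁ h12
    rw [entropy_eq hK p hpos, entropy_eq hK p hpos]
    have hj := jensen_Zf hK p hpos T₂ T₁
    have hc := cf_mono hK p hpos h12
    have hm := mul_le_mul_of_nonneg_left hc hT₁.le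
    linarith
  refine ⟨main, fun T hT hT1 => ?_⟩
  have hflat1 : flatten p 1 = p := by
    funext i
    simp [flatten, Real.rpow_one, hsum]
  have := main T 1 hT hT1
  rwa [hflat1] at this
end
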